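/- arXiv:1504.05906 — 3 statements merged into one kernel-verified Lean document; each statement's English description precedes it below -/
import Mathlib

section
/- Let 1 ≤ p ≤ q < ∞, let σ and w be weights (nonnegative locally integrable functions) on ℝⁿ, let 0 < α < n, and let D be a dyadic grid. Let M_α^D be the dyadic fractional maximal operator M_α^D f(x) = sup_{Q∈D, x∈Q} |Q|^{α/n} ⟨|f|⟩_Q. Suppose [σ,w] := sup_{Q∈D} σ(Q)^{1/p'} w(Q)^{1/q} |Q|^{α/n - 1} < ∞. Then for all f and all λ > 0, λ^q w({x : M_α^D(fσ)(x) > λ}) ≲ [σ,w]^q ‖f‖_{L^p(σ)}^q. -/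
/-!
Fix a scale `2 ^ N`. The dyadic cubes `Q` of side at most `2 ^ N` with
`|Q|^{α/n} ⟨fσ⟩_Q > λ` cover the corresponding part of the superlevel set, and the maximal ones
among them are pairwise disjoint. On each of them Hölder's inequality in `L^p(σ)` gives
`λ < |Q|^{α/n-1} σ(Q)^{1/p'} (∫_Q f^p σ)^{1/p}`, so `λ^q w(Q) ≤ [σ,w]^q (∫_Q f^p σ)^{q/p}`.
Since `q/p ≥ 1`, summing over the disjoint maximal cubes gives the bound with constant `1`,
and letting `N → ∞` finishes the proof.
-/

open MeasureTheory Set ENNReal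

noncomputable section

/-- An axis-parallel cube in `ℝⁿ`. -/
structure Cube (n : ℕ) where
  corner : Fin n → ℝ
  side : ℝ
  side_pos : 0 < side

namespace Cube

/-- The underlying (half-open) set of a cube. -/
def toSet {n : ℕ} (Q : Cube n) : Set (Fin n → ℝ) :=
  {x | ∀ i, Q.corner i ≤ x i ∧ x i < Q.corner i + Q.side}

/-- The volume `|Q| = side^n` of a cube. -/
def vol {n : ℕ} (Q : Cube n) : ℝ := Q.side ^ n

end Cube

/-- A dyadic grid: cubes of dyadic side lengths, nested or disjoint, partitioning `ℝⁿ`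
at every scale. -/
def IsDyadicGrid {n : ℕ} (D : Set (Cube n)) : Prop :=
  (∀ Q ∈ D, ∃ k : ℤ, Q.side = 2 ^ k) ∧
  (∀ Q ∈ D, ∀ R ∈ D, (Q.toSet ∩ R.toSet).Nonempty →
      Q.toSet ⊆ R.toSet ∨ R.toSet ⊆ Q.toSet) ∧
  (∀ k : ℤ, (⋃ Q ∈ {Q ∈ D | Q.side = 2 ^ k}, Q.toSet) = univ)

/-- The average `⟨f⟩_Q^μ = (1/μ(Q)) ∫_Q f dμ`. -/
def avg {n : ℕ} (μ : Measure (Fin n → ℝ)) (f : (Fin n → ℝ) → ℝ≥0∞) (Q : Cube n) : ℝ≥0∞ :=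
  (∫⁻ x in Q.toSet, f x ∂μ) / μ Q.toSet

/-- The Lebesgue average `⟨f⟩_Q = (1/|Q|) ∫_Q f`. -/
def lebAvg {n : ℕ} (f : (Fin n → ℝ) → ℝ≥0∞) (Q : Cube n) : ℝ≥0∞ :=
  (∫⁻ x in Q.toSet, f x) / ENNReal.ofReal Q.vol

/-- `σ(Q) = ∫_Q σ dx`. -/
def wt {n : ℕ} (σ : (Fin n → ℝ) → ℝ≥0∞) (Q : Cube n) : ℝ≥0∞ :=
  ∫⁻ x in Q.toSet, σ x

/-- The weighted average `⟨f⟩_Q^σ = (1/σ(Q)) ∫_Q f σ dx`. -/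
def avgw {n : ℕ} (σ f : (Fin n → ℝ) → ℝ≥0∞) (Q : Cube n) : ℝ≥0∞ :=
  (∫⁻ x in Q.toSet, f x * σ x) / wt σ Q

/-- The dyadic fractional maximal operator `M_α^D`. -/
def dyFracMax {n : ℕ} (D : Set (Cube n)) (α : ℝ) (f : (Fin n → ℝ) → ℝ≥0∞)
    (x : Fin n → ℝ) : ℝ≥0∞ :=
  ⨆ (Q : Cube n) (_ : Q ∈ D) (_ : x ∈ Q.toSet),
    ENNReal.ofReal (Q.vol ^ (α / (n : ℝ))) * lebAvg f Q

/-- The fractional maximal operator `M_α` (supremum over all cubes). -/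
def fracMax {n : ℕ} (α : ℝ) (f : (Fin n → ℝ) → ℝ≥0∞) (x : Fin n → ℝ) : ℝ≥0∞ :=
  ⨆ (Q : Cube n) (_ : x ∈ Q.toSet), ENNReal.ofReal (Q.vol ^ (α / (n : ℝ))) * lebAvg f Q

/-- The Hardy–Littlewood maximal operator (over all cubes). -/
def hlMax {n : ℕ} (f : (Fin n → ℝ) → ℝ≥0∞) (x : Fin n → ℝ) : ℝ≥0∞ :=
  ⨆ (Q : Cube n) (_ : x ∈ Q.toSet), lebAvg f Q

/-- The entropy functional `ρ_σ(Q) = (1/σ(Q)) ∫_Q M(σ 1_Q)`. -/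
def entropy {n : ℕ} (σ : (Fin n → ℝ) → ℝ≥0∞) (Q : Cube n) : ℝ≥0∞ :=
  (∫⁻ x in Q.toSet, hlMax (Q.toSet.indicator σ) x) / wt σ Q

/-- The fractional integral operator `I_α f (x) = ∫ f(y) |x-y|^{α-n} dy`. -/
def fracInt {n : ℕ} (α : ℝ) (f : (Fin n → ℝ) → ℝ≥0∞) (x : Fin n → ℝ) : ℝ≥0∞ :=
  ∫⁻ y, f y * ENNReal.ofReal (Real.sqrt (∑ i, (x i - y i) ^ 2) ^ (α - (n : ℝ)))

/-- `Q` is a maximal element of `S` strictly contained in `P`. -/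
def IsMaxChild {n : ℕ} (S : Set (Cube n)) (P Q : Cube n) : Prop :=
  Q ∈ S ∧ Q.toSet ⊂ P.toSet ∧
    ∀ R ∈ S, R.toSet ⊂ P.toSet → Q.toSet ⊆ R.toSet → R.toSet ⊆ Q.toSet

/-- A sparse collection of cubes: the maximal elements strictly inside any `P` in the
collection have total volume at most `|P|/2`. -/
def IsSparse {n : ℕ} (S : Set (Cube n)) : Prop :=
  ∀ P ∈ S, (∑' Q : {Q : Cube n // IsMaxChild S P Q}, ENNReal.ofReal Q.1.vol)
      ≤ ENNReal.ofReal P.vol / 2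

/-- `P` is the `S`-parent of `Q`: the minimal element of `S` containing `Q`. -/
def IsSParent {n : ℕ} (S : Set (Cube n)) (Q P : Cube n) : Prop :=
  P ∈ S ∧ Q.toSet ⊆ P.toSet ∧ ∀ R ∈ S, Q.toSet ⊆ R.toSet → P.toSet ⊆ R.toSet

/-- The separated-bump entropy functional
`ϱ_σ^{α,p,q}(Q) = σ(Q)^{-q/p} ∫_Q M_α(1_Q σ)^{q/p}`. -/
def sepRho {n : ℕ} (α p q : ℝ) (σ : (Fin n → ℝ) → ℝ≥0∞) (Q : Cube n) : ℝ≥0∞ :=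
  (∫⁻ x in Q.toSet, fracMax α (Q.toSet.indicator σ) x ^ (q / p)) / wt σ Q ^ (q / p)

/-- The separated entropy bump constant `[[σ,w]]_{α,p,q}` with bump function `ε`. -/
def sepBump {n : ℕ} (α p q : ℝ) (ε : ℝ → ℝ) (σ w : (Fin n → ℝ) → ℝ≥0∞) : ℝ≥0∞ :=
  ⨆ Q : Cube n,
    (ENNReal.ofReal (Q.vol ^ (α / (n : ℝ))) * lebAvg σ Q) ^ (q * (1 - 1 / p)) *
      lebAvg w Q * sepRho α p q σ Q * ENNReal.ofReal (ε (sepRho α p q σ Q).toReal)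

/-- The one-bump entropy quantity for the fractional maximal operator:
`β(Q) = |Q|^{α/n-1} σ(Q)^{1/p'} w(Q)^{1/q} ρ_σ(Q)^{1/p} ε_q(ρ_σ(Q))`. -/
def maxBump {n : ℕ} (α p q : ℝ) (εq : ℝ → ℝ) (σ w : (Fin n → ℝ) → ℝ≥0∞)
    (Q : Cube n) : ℝ≥0∞ :=
  ENNReal.ofReal (Q.vol ^ (α / (n : ℝ) - 1)) * wt σ Q ^ (1 - 1 / p) * wt w Q ^ (1 / q) *
    entropy σ Q ^ (1 / p) * ENNReal.ofReal (εq (entropy σ Q).toReal)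

/-- The one-bump entropy quantity for the fractional integral operator:
`β(Q) = |Q|^{α/n-1} σ(Q)^{1/p'} w(Q)^{1/q} ρ_σ(Q)^{1/p} ε_p(ρ_σ(Q)) ρ_w(Q)^{1/q'} ε_{q'}(ρ_w(Q))`. -/
def intBump {n : ℕ} (α p q : ℝ) (εp εq' : ℝ → ℝ) (σ w : (Fin n → ℝ) → ℝ≥0∞)
    (Q : Cube n) : ℝ≥0∞ :=
  ENNReal.ofReal (Q.vol ^ (α / (n : ℝ) - 1)) * wt σ Q ^ (1 - 1 / p) * wt w Q ^ (1 / q) *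
    entropy σ Q ^ (1 / p) * ENNReal.ofReal (εp (entropy σ Q).toReal) *
    entropy w Q ^ (1 - 1 / q) * ENNReal.ofReal (εq' (entropy w Q).toReal)

namespace Cube

variable {n : ℕ}

theorem toSet_eq_pi (Q : Cube n) :
    Q.toSet = univ.pi fun i => Ico (Q.corner i) (Q.corner i + Q.side) := by
  ext x
  simp [toSet]

theorem measurableSet_toSet (Q : Cube n) : MeasurableSet Q.toSet := by
  rw [toSet_eq_pi]
  exact MeasurableSet.univ_pi fun _ => measurableSet_Ico

theorem corner_mem (Q : Cube n) : Q.corner ∈ Q.toSet :=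
  fun _ => ⟨le_rfl, by linarith [Q.side_pos]⟩

theorem vol_pos (Q : Cube n) : 0 < Q.vol := pow_pos Q.side_pos n

theorem interior_toSet_nonempty (Q : Cube n) : (interior Q.toSet).Nonempty := by
  rw [toSet_eq_pi, interior_pi_set finite_univ]
  exact univ_pi_nonempty_iff.2 fun i => by
    simpa [interior_Ico] using Q.side_pos

theorem corner_le_of_subset {Q R : Cube n} (h : Q.toSet ⊆ R.toSet) (i : Fin n) :
    R.corner i ≤ Q.corner i ∧ Q.corner i + Q.side ≤ R.corner i + R.side := by
  have hQ : ∀ i, Q.corner i < Q.corner i + Q.side := fun _ => by linarith [Q.side_pos]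
  rw [toSet_eq_pi, toSet_eq_pi, univ_pi_subset_univ_pi_iff] at h
  rcases h with h | ⟨j, hj⟩
  · exact (Ico_subset_Ico_iff (hQ i)).1 (h i)
  · exact absurd hj (nonempty_Ico.2 (hQ j)).ne_empty

theorem side_le_of_subset (hn : 0 < n) {Q R : Cube n} (h : Q.toSet ⊆ R.toSet) :
    Q.side ≤ R.side := by
  obtain ⟨h₁, h₂⟩ := corner_le_of_subset h ⟨0, hn⟩
  linarith

theorem eq_of_subset_of_side_eq {Q R : Cube n} (h : Q.toSet ⊆ R.toSet)
    (hs : Q.side = R.side) : Q = R := by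
  have hc : Q.corner = R.corner := funext fun i => by
    obtain ⟨h₁, h₂⟩ := corner_le_of_subset h i
    linarith
  cases Q
  cases R
  simp_all

theorem countable_of_pairwiseDisjoint {S : Set (Cube n)} (h : S.PairwiseDisjoint toSet) :
    S.Countable :=
  h.countable_of_nonempty_interior fun Q _ => Q.interior_toSet_nonempty

end Cube

def maximalCubes {n : ℕ} (S : Set (Cube n)) : Set (Cube n) :=
  {Q | Q ∈ S ∧ ∀ R ∈ S, Q.toSet ⊆ R.toSet → R = Q}

namespace IsDyadicGrid

variable {n : ℕ} {D S : Set (Cube n)}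

theorem eq_of_side_eq (hD : IsDyadicGrid D) {Q R : Cube n} (hQ : Q ∈ D) (hR : R ∈ D)
    (hQR : (Q.toSet ∩ R.toSet).Nonempty) (hs : Q.side = R.side) : Q = R := by
  rcases hD.2.1 Q hQ R hR hQR with h | h
  · exact Cube.eq_of_subset_of_side_eq h hs
  · exact (Cube.eq_of_subset_of_side_eq h hs.symm).symm

/-- The cubes of the grid containing `Q` are determined by their sides `2 ^ k`, and only
finitely many `k` lie between the scale of `Q` and `N`. -/
theorem exists_mem_maximalCubes_superset (hD : IsDyadicGrid D) (hn : 0 < n) (hSD : S ⊆ D)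
    {N : ℤ} (hSN : ∀ R ∈ S, R.side ≤ 2 ^ N) {Q : Cube n} (hQ : Q ∈ S) :
    ∃ R ∈ maximalCubes S, Q.toSet ⊆ R.toSet := by
  set T : Set (Cube n) := {R | R ∈ S ∧ Q.toSet ⊆ R.toSet}
  have hside_inj : InjOn Cube.side T := fun R₁ h₁ R₂ h₂ hs =>
    hD.eq_of_side_eq (hSD h₁.1) (hSD h₂.1)
      ⟨Q.corner, h₁.2 Q.corner_mem, h₂.2 Q.corner_mem⟩ hs
  obtain ⟨k, hk⟩ := hD.1 Q (hSD hQ)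
  have hside_fin : (Cube.side '' T).Finite := by
    refine ((finite_Icc k N).image fun j : ℤ => (2 : ℝ) ^ j).subset ?_
    rintro _ ⟨R, hR, rfl⟩
    obtain ⟨j, hj⟩ := hD.1 R (hSD hR.1)
    refine ⟨j, ⟨?_, ?_⟩, hj.symm⟩
    · rw [← zpow_le_zpow_iff_right₀ (one_lt_two : (1 : ℝ) < 2), ← hk, ← hj]
      exact Cube.side_le_of_subset hn hR.2
    · rw [← zpow_le_zpow_iff_right₀ (one_lt_two : (1 : ℝ) < 2), ← hj]
      exact hSN R hR.1
  obtain ⟨R, hRT, hRmax⟩ :=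
    (Finite.of_finite_image hside_fin hside_inj).exists_maximalFor Cube.side T ⟨Q, hQ, subset_rfl⟩
  refine ⟨R, ⟨hRT.1, fun R' hR' hRR' => ?_⟩, hRT.2⟩
  have hle := Cube.side_le_of_subset hn hRR'
  exact (Cube.eq_of_subset_of_side_eq hRR'
    (le_antisymm hle (hRmax ⟨hR', hRT.2.trans hRR'⟩ hle))).symm

theorem pairwiseDisjoint_maximalCubes (hD : IsDyadicGrid D) (hSD : S ⊆ D) :
    (maximalCubes S).PairwiseDisjoint Cube.toSet := by
  intro Q hQ R hR hne
  rw [Function.onFun, disjoint_iff_inter_eq_empty]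
  by_contra h
  rcases hD.2.1 Q (hSD hQ.1) R (hSD hR.1) (nonempty_iff_ne_empty.2 h) with hsub | hsub
  · exact hne (hQ.2 R hR.1 hsub).symm
  · exact hne (hR.2 Q hQ.1 hsub)

theorem biUnion_maximalCubes (hD : IsDyadicGrid D) (hn : 0 < n) (hSD : S ⊆ D) {N : ℤ}
    (hSN : ∀ R ∈ S, R.side ≤ 2 ^ N) :
    ⋃ Q ∈ maximalCubes S, Q.toSet = ⋃ Q ∈ S, Q.toSet := by
  refine (biUnion_subset_biUnion_left fun Q hQ => hQ.1).antisymm ?_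
  refine iUnion₂_subset fun Q hQ => ?_
  obtain ⟨R, hR, hQR⟩ := hD.exists_mem_maximalCubes_superset hn hSD hSN hQ
  exact hQR.trans (subset_biUnion_of_mem hR)

end IsDyadicGrid

theorem ENNReal.tsum_rpow_le_rpow_tsum {ι : Type*} (a : ι → ℝ≥0∞) {r : ℝ} (hr : 1 ≤ r) :
    ∑' i, a i ^ r ≤ (∑' i, a i) ^ r := by
  set S := ∑' i, a i
  have hsplit : ∀ b : ℝ≥0∞, b ^ r = b ^ (r - 1) * b := fun b => by
    conv_lhs => rw [← sub_add_cancel r 1]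
    rw [ENNReal.rpow_add_of_nonneg _ _ (by linarith) zero_le_one, ENNReal.rpow_one]
  calc ∑' i, a i ^ r ≤ ∑' i, S ^ (r - 1) * a i := by
        refine ENNReal.tsum_le_tsum fun i => ?_
        rw [hsplit]
        gcongr
        exact ENNReal.le_tsum i
    _ = S ^ r := by rw [ENNReal.tsum_mul_left, ← hsplit]

/-- Hölder's inequality against the measure `σ μ`, whose total mass gives the second factor. -/
theorem ENNReal.lintegral_mul_le_rpow_lintegral_mul_rpow_lintegral {α : Type*}
    [MeasurableSpace α] {μ : Measure α} {p : ℝ} (hp : 1 ≤ p) {f σ : α → ℝ≥0∞}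
    (hf : Measurable f) (hσ : Measurable σ) :
    ∫⁻ x, f x * σ x ∂μ ≤ (∫⁻ x, f x ^ p * σ x ∂μ) ^ (1 / p) * (∫⁻ x, σ x ∂μ) ^ (1 - 1 / p) := by
  rcases hp.eq_or_lt with rfl | hp
  · simp
  have hconj : p.HolderConjugate (p / (p - 1)) := Real.HolderConjugate.conjExponent hp
  have hexp : 1 / (p / (p - 1)) = 1 - 1 / p := by
    field_simp [(by linarith : p - 1 ≠ 0)]
  have hweighted : ∀ g : α → ℝ≥0∞, Measurable g →
      ∫⁻ x, g x ∂μ.withDensity σ = ∫⁻ x, g x * σ x ∂μ := fun g hg => by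
    rw [lintegral_withDensity_eq_lintegral_mul _ hσ hg]
    simp_rw [Pi.mul_apply, mul_comm]
  have h := ENNReal.lintegral_mul_le_Lp_mul_Lq (μ.withDensity σ) hconj hf.aemeasurable
    (aemeasurable_const (b := (1 : ℝ≥0∞)))
  simp only [Pi.mul_apply, mul_one, ENNReal.one_rpow] at h
  rw [hweighted f hf, hweighted _ (hf.pow_const p), hweighted _ measurable_const, hexp] at h
  simpa using h

theorem mul_measure_biUnion_le_mul_rpow {α ι : Type*} [MeasurableSpace α] {μ ν : Measure α}
    {s : Set ι} {E : ι → Set α} (hs : s.Countable) (hd : s.PairwiseDisjoint E)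
    (hE : ∀ i ∈ s, MeasurableSet (E i)) {c K : ℝ≥0∞} {r : ℝ} (hr : 1 ≤ r)
    (h : ∀ i ∈ s, c * μ (E i) ≤ K * ν (E i) ^ r) :
    c * μ (⋃ i ∈ s, E i) ≤ K * ν univ ^ r := by
  have : Countable s := hs.to_subtype
  have hr₀ : 0 ≤ r := by linarith
  calc c * μ (⋃ i ∈ s, E i) ≤ c * ∑' i : s, μ (E i) := by gcongr; exact measure_biUnion_le μ hs E
    _ = ∑' i : s, c * μ (E i) := ENNReal.tsum_mul_left.symm
    _ ≤ ∑' i : s, K * ν (E i) ^ r := ENNReal.tsum_le_tsum fun i => h i i.2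
    _ = K * ∑' i : s, ν (E i) ^ r := ENNReal.tsum_mul_left
    _ ≤ K * (∑' i : s, ν (E i)) ^ r := by gcongr; exact ENNReal.tsum_rpow_le_rpow_tsum _ hr
    _ = K * ν (⋃ i ∈ s, E i) ^ r := by rw [measure_biUnion hs hd hE]
    _ ≤ K * ν univ ^ r := by gcongr; exact subset_univ _

section FractionalMaximal

variable {n : ℕ}

def apqChar (p q α : ℝ) (σ w : (Fin n → ℝ) → ℝ≥0∞) (Q : Cube n) : ℝ≥0∞ :=
  wt σ Q ^ (1 - 1/p) * wt w Q ^ (1/q) * ENNReal.ofReal (Q.vol ^ (α/(n:ℝ) - 1))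

theorem ofReal_vol_rpow_mul_lebAvg (Q : Cube n) (β : ℝ) (g : (Fin n → ℝ) → ℝ≥0∞) :
    ENNReal.ofReal (Q.vol ^ β) * lebAvg g Q
      = ENNReal.ofReal (Q.vol ^ (β - 1)) * ∫⁻ x in Q.toSet, g x := by
  rw [Real.rpow_sub Q.vol_pos, Real.rpow_one, ENNReal.ofReal_div_of_pos Q.vol_pos, lebAvg,
    div_eq_mul_inv, div_eq_mul_inv, mul_right_comm, mul_assoc]

theorem rpow_mul_wt_le_apqChar_rpow_mul_of_lt {p q α : ℝ} (hp : 1 ≤ p) (hq : 0 < q)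
    {σ w f : (Fin n → ℝ) → ℝ≥0∞} (hσ : Measurable σ) (hf : Measurable f) {Q : Cube n}
    {lam : ℝ≥0∞}
    (hlam : lam < ENNReal.ofReal (Q.vol ^ (α/(n:ℝ))) * lebAvg (fun y => f y * σ y) Q) :
    lam ^ q * wt w Q ≤ apqChar p q α σ w Q ^ q * (∫⁻ x in Q.toSet, f x ^ p * σ x) ^ (q/p) := by
  set J := ∫⁻ x in Q.toSet, f x ^ p * σ x
  rw [ofReal_vol_rpow_mul_lebAvg] at hlam
  have hlam' : lam ≤ ENNReal.ofReal (Q.vol ^ (α/(n:ℝ) - 1)) * (J ^ (1/p) * wt σ Q ^ (1 - 1/p)) :=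
    hlam.le.trans (by gcongr; exact ENNReal.lintegral_mul_le_rpow_lintegral_mul_rpow_lintegral hp hf hσ)
  have hJ : (J ^ (1/p)) ^ q = J ^ (q/p) := by rw [← ENNReal.rpow_mul]; ring_nf
  have hw : (wt w Q ^ (1/q)) ^ q = wt w Q := by
    rw [← ENNReal.rpow_mul, one_div_mul_cancel hq.ne', ENNReal.rpow_one]
  calc lam ^ q * wt w Q
      ≤ (ENNReal.ofReal (Q.vol ^ (α/(n:ℝ) - 1)) * (J ^ (1/p) * wt σ Q ^ (1 - 1/p))) ^ q
          * wt w Q := by gcongr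
    _ = apqChar p q α σ w Q ^ q * J ^ (q/p) := by
        simp only [apqChar, ENNReal.mul_rpow_of_nonneg _ _ hq.le, hJ, hw]
        ring

/-- Truncating at scale `2 ^ N` guarantees that every such cube lies in a maximal one. -/
def superlevelCubes (D : Set (Cube n)) (α : ℝ) (g : (Fin n → ℝ) → ℝ≥0∞) (lam : ℝ≥0∞)
    (N : ℤ) : Set (Cube n) :=
  {Q | Q ∈ D ∧ Q.side ≤ 2 ^ N ∧ lam < ENNReal.ofReal (Q.vol ^ (α / (n : ℝ))) * lebAvg g Q}

variable {D : Set (Cube n)} {α : ℝ} {g : (Fin n → ℝ) → ℝ≥0∞} {lam : ℝ≥0∞}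

theorem monotone_superlevelCubes : Monotone (superlevelCubes D α g lam) :=
  fun _ _ hNM _ ⟨hQD, hQN, hQlam⟩ =>
    ⟨hQD, hQN.trans (zpow_le_zpow_right₀ one_le_two hNM), hQlam⟩

theorem setOf_lt_dyFracMax_eq_iUnion (hD : ∀ Q ∈ D, ∃ k : ℤ, Q.side = 2 ^ k) :
    {x | lam < dyFracMax D α g x} = ⋃ N : ℤ, ⋃ Q ∈ superlevelCubes D α g lam N, Q.toSet := by
  ext x
  simp only [mem_ofPred_eq, dyFracMax, lt_iSup_iff, mem_iUnion, exists_prop]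
  constructor
  · rintro ⟨Q, hQD, hxQ, hQlam⟩
    obtain ⟨k, hk⟩ := hD Q hQD
    exact ⟨k, Q, ⟨hQD, hk.le, hQlam⟩, hxQ⟩
  · rintro ⟨N, Q, ⟨hQD, -, hQlam⟩, hxQ⟩
    exact ⟨Q, hQD, hxQ, hQlam⟩

end FractionalMaximal

/-- the weak-type two-weight bound for the dyadic fractional maximal
operator under the joint `A_{p,q}`-type condition (Theorem 1.1 / Lemma 3.1). -/
theorem stmt2 (n : ℕ) (p q α : ℝ) (hp : 1 ≤ p) (hpq : p ≤ q) (hα : 0 < α) (hαn : α < n) :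
    ∃ C : ℝ≥0∞, C ≠ ∞ ∧
    ∀ (σ w : (Fin n → ℝ) → ℝ≥0∞), Measurable σ → Measurable w →
      (∀ Q : Cube n, wt σ Q ≠ ∞) → (∀ Q : Cube n, wt w Q ≠ ∞) →
    ∀ (D : Set (Cube n)), IsDyadicGrid D →
      (⨆ Q ∈ D, wt σ Q ^ (1 - 1/p) * wt w Q ^ (1/q) *
          ENNReal.ofReal (Q.vol ^ (α/(n:ℝ) - 1))) ≠ ∞ →
    ∀ f : (Fin n → ℝ) → ℝ≥0∞, Measurable f → ∀ lam : ℝ≥0∞, 0 < lam →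
      lam ^ q * (∫⁻ x in {x | lam < dyFracMax D α (fun y => f y * σ y) x}, w x)
        ≤ C * (⨆ Q ∈ D, wt σ Q ^ (1 - 1/p) * wt w Q ^ (1/q) *
            ENNReal.ofReal (Q.vol ^ (α/(n:ℝ) - 1))) ^ q * (∫⁻ x, f x ^ p * σ x) ^ (q/p) := by
  have hn : 0 < n := by exact_mod_cast hα.trans hαn
  have hq : 0 < q := by linarith
  refine ⟨1, one_ne_top, fun σ w hσ _ _ _ D hD _ f hf lam _ => ?_⟩
  change _ ≤ _ * (⨆ Q ∈ D, apqChar p q α σ w Q) ^ q * _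
  set S := superlevelCubes D α (fun y => f y * σ y) lam
  have hmono : Monotone fun N => ⋃ Q ∈ S N, Q.toSet :=
    fun _ _ hNM => biUnion_subset_biUnion_left (monotone_superlevelCubes hNM)
  rw [one_mul, ← withDensity_apply', setOf_lt_dyFracMax_eq_iUnion hD.1, hmono.measure_iUnion,
    ENNReal.mul_iSup]
  refine iSup_le fun N => ?_
  have hSD : S N ⊆ D := fun Q hQ => hQ.1
  have hdisj := hD.pairwiseDisjoint_maximalCubes hSD
  rw [← hD.biUnion_maximalCubes hn hSD fun Q hQ => hQ.2.1, ← setLIntegral_univ,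
    ← withDensity_apply']
  refine mul_measure_biUnion_le_mul_rpow (Cube.countable_of_pairwiseDisjoint hdisj) hdisj
    (fun Q _ => Q.measurableSet_toSet) ((one_le_div (by linarith)).2 hpq) fun Q hQ => ?_
  rw [withDensity_apply', withDensity_apply']
  exact (rpow_mul_wt_le_apqChar_rpow_mul_of_lt hp hq hσ hf hQ.1.2.2).trans <| mul_le_mul_left
    (ENNReal.rpow_le_rpow (le_iSup₂ (f := fun Q _ => apqChar p q α σ w Q) Q hQ.1.1) hq.le) _
end
end

section
/- Let D be a dyadic grid, Q₀ ∈ D, 0 < α < n, f ≥ 0, and S the stopping collection built by: Q₀ ∈ S and, recursively, for minimal P ∈ S add the maximal Q ⊊ P with ⟨f⟩_Q > 4⟨f⟩_P. For each Q ∈ D with Q ⊆ Q₀ let Q^S denote its S-parent (the minimal S ∈ S containing Q). Then for every x ∈ Q₀, ∑_{Q∈D: Q⊆Q₀} |Q|^{α/n} ⟨f⟩_Q 𝟙_Q(x) ≤ C(α,n) ∑_{S∈S} |S|^{α/n} ⟨f⟩_S 𝟙_S(x). -/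
open MeasureTheory Set ENNReal

noncomputable section

/-!
Send each dyadic cube `Q ∋ x` inside `Q₀` to its `S`-parent `P`, where `⟨f⟩_Q ≤ 4⟨f⟩_P`.
Dyadic cubes containing `x` are determined by their side length, so the cubes with a given
parent that contain `x` have distinct dyadic sides `2ᵏ ≤ ℓ(P)`, and
`∑ |Q|^{α/n} = ∑ ℓ(Q)^α ≤ ∑_{2ᵏ ≤ ℓ(P)} 2^{kα} ≤ (1 - 2^{-α})⁻¹ |P|^{α/n}`.
-/

namespace Cube

variable {n : ℕ}

lemma Ico_subset_Ico_of_toSet_subset {Q P : Cube n} (h : Q.toSet ⊆ P.toSet) (i : Fin n) :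
    Ico (Q.corner i) (Q.corner i + Q.side) ⊆ Ico (P.corner i) (P.corner i + P.side) := by
  intro t ht
  have hmem : Function.update Q.corner i t ∈ Q.toSet := by
    intro j
    rcases eq_or_ne j i with rfl | hj
    · simpa using ht
    · simp [hj, Q.side_pos]
  simpa using h hmem i

lemma side_le_side_of_toSet_subset (hn : n ≠ 0) {Q P : Cube n} (h : Q.toSet ⊆ P.toSet) :
    Q.side ≤ P.side := by
  have hIco := Ico_subset_Ico_of_toSet_subset h ⟨0, Nat.pos_of_ne_zero hn⟩
  rw [Ico_subset_Ico_iff (by linarith [Q.side_pos])] at hIco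
  linarith [hIco.1, hIco.2]

lemma eq_of_toSet_subset_of_side_eq {Q P : Cube n} (h : Q.toSet ⊆ P.toSet)
    (hs : Q.side = P.side) : Q = P := by
  have hcorner : Q.corner = P.corner := funext fun i => by
    have hIco := Ico_subset_Ico_of_toSet_subset h i
    rw [Ico_subset_Ico_iff (by linarith [Q.side_pos])] at hIco
    linarith [hIco.1, hIco.2]
  cases Q; cases P
  simp_all

lemma vol_rpow_div (hn : n ≠ 0) (Q : Cube n) (α : ℝ) : Q.vol ^ (α / n) = Q.side ^ α := by
  rw [vol, ← Real.rpow_natCast, ← Real.rpow_mul Q.side_pos.le]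
  congr 1
  field_simp

end Cube

lemma IsDyadicGrid.eq_of_side_eq_s6 {n : ℕ} {D : Set (Cube n)} (hD : IsDyadicGrid D)
    {Q R : Cube n} (hQ : Q ∈ D) (hR : R ∈ D) {x : Fin n → ℝ} (hxQ : x ∈ Q.toSet)
    (hxR : x ∈ R.toSet) (hs : Q.side = R.side) : Q = R := by
  rcases hD.2.1 Q hQ R hR ⟨x, hxQ, hxR⟩ with h | h
  · exact Cube.eq_of_toSet_subset_of_side_eq h hs
  · exact (Cube.eq_of_toSet_subset_of_side_eq h hs.symm).symm

lemma ofReal_rpow_neg_lt_one {b : ℝ} (hb : 1 < b) {α : ℝ} (hα : 0 < α) :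
    ENNReal.ofReal (b ^ (-α)) < 1 :=
  ofReal_lt_one.2 (Real.rpow_lt_one_of_one_lt_of_neg hb (neg_neg_iff_pos.2 hα))

lemma tsum_ite_zpow_le_rpow {b : ℝ} (hb : 1 < b) {α : ℝ} (hα : 0 < α) {s : ℝ} (hs : 0 < s) :
    ∑' k : ℤ, (if b ^ k ≤ s then ENNReal.ofReal ((b ^ k) ^ α) else 0)
      ≤ (1 - ENNReal.ofReal (b ^ (-α)))⁻¹ * ENNReal.ofReal (s ^ α) := by
  have hb0 : 0 < b := one_pos.trans hb
  set k₀ : ℤ := ⌊Real.logb b s⌋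
  have hk₀ : ∀ k : ℤ, b ^ k ≤ s ↔ k ≤ k₀ := fun k => by
    rw [Int.le_floor, Real.le_logb_iff_rpow_le hb hs, Real.rpow_intCast]
  have hsupp : Function.support (fun k : ℤ => if b ^ k ≤ s then ENNReal.ofReal ((b ^ k) ^ α)
      else 0) ⊆ range fun j : ℕ => k₀ - j := fun k hk => by
    have hk : k ≤ k₀ := (hk₀ k).1 (by by_contra h; simp [h] at hk)
    exact ⟨(k₀ - k).toNat, by simp only; omega⟩
  have hinj : Function.Injective fun j : ℕ => k₀ - j := fun _ _ h => by simpa using h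
  rw [← hinj.tsum_eq hsupp, ← ENNReal.tsum_geometric, ← ENNReal.tsum_mul_right]
  refine ENNReal.tsum_le_tsum fun j => ?_
  split_ifs with h
  · rw [← ENNReal.ofReal_pow (by positivity), ← ENNReal.ofReal_mul (by positivity)]
    refine ENNReal.ofReal_le_ofReal ?_
    have hpow : ∀ m : ℤ, (b ^ m) ^ α = b ^ (m * α) := fun m => by
      rw [← Real.rpow_intCast, ← Real.rpow_mul hb0.le]
    calc (b ^ (k₀ - j)) ^ α = (b ^ (-α)) ^ j * (b ^ k₀) ^ α := by
          rw [hpow, hpow, ← Real.rpow_natCast, ← Real.rpow_mul hb0.le, ← Real.rpow_add hb0]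
          push_cast
          ring_nf
      _ ≤ (b ^ (-α)) ^ j * s ^ α := by
          gcongr
          exact (hk₀ k₀).2 le_rfl
  · exact zero_le

lemma IsDyadicGrid.tsum_indicator_side_rpow_le {n : ℕ} {D : Set (Cube n)} (hD : IsDyadicGrid D)
    {α : ℝ} (hα : 0 < α) {s : ℝ} (hs : 0 < s) (x : Fin n → ℝ) {ι : Type*} {e : ι → Cube n}
    (he : Function.Injective e) (heD : ∀ i, e i ∈ D) (hes : ∀ i, (e i).side ≤ s) :
    ∑' i, (e i).toSet.indicator (fun _ => ENNReal.ofReal ((e i).side ^ α)) x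
      ≤ (1 - ENNReal.ofReal ((2 : ℝ) ^ (-α)))⁻¹ * ENNReal.ofReal (s ^ α) := by
  choose k hk using fun i => hD.1 (e i) (heD i)
  have hsupp : Function.support (fun i => (e i).toSet.indicator
      (fun _ => ENNReal.ofReal ((e i).side ^ α)) x) ⊆ {i | x ∈ (e i).toSet} :=
    fun i hi => by by_contra h; exact hi (indicator_of_notMem (show x ∉ (e i).toSet from h) _)
  have hinj : Function.Injective fun i : {i | x ∈ (e i).toSet} => k i := fun i j h =>
    Subtype.ext (he (hD.eq_of_side_eq_s6 (heD i) (heD j) i.2 j.2 (by rw [hk, hk]; exact congrArg _ h)))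
  rw [← tsum_subtype_eq_of_support_subset hsupp]
  calc _ = ∑' i : {i | x ∈ (e i).toSet},
        (fun k : ℤ => if (2 : ℝ) ^ k ≤ s then ENNReal.ofReal (((2 : ℝ) ^ k) ^ α) else 0) (k i) :=
        tsum_congr fun i => by
          rw [indicator_of_mem (show x ∈ (e i).toSet from i.2)]
          simp only [← hk, hes, if_true]
    _ ≤ _ := ENNReal.tsum_comp_le_tsum_of_injective hinj _
    _ ≤ _ := tsum_ite_zpow_le_rpow one_lt_two hα hs

lemma IsDyadicGrid.tsum_indicator_vol_rpow_le {n : ℕ} (hn : n ≠ 0) {D : Set (Cube n)}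
    (hD : IsDyadicGrid D) {α : ℝ} (hα : 0 < α) (P : Cube n) (x : Fin n → ℝ) {ι : Type*}
    {e : ι → Cube n} (he : Function.Injective e) (heD : ∀ i, e i ∈ D)
    (heP : ∀ i, (e i).toSet ⊆ P.toSet) :
    ∑' i, (e i).toSet.indicator (fun _ => ENNReal.ofReal ((e i).vol ^ (α / n))) x
      ≤ (1 - ENNReal.ofReal ((2 : ℝ) ^ (-α)))⁻¹ *
        P.toSet.indicator (fun _ => ENNReal.ofReal (P.vol ^ (α / n))) x := by
  by_cases hxP : x ∈ P.toSet
  · simp_rw [Cube.vol_rpow_div hn, indicator_of_mem hxP]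
    exact hD.tsum_indicator_side_rpow_le hα P.side_pos x he heD
      fun i => Cube.side_le_side_of_toSet_subset hn (heP i)
  · have hx : ∀ i, x ∉ (e i).toSet := fun i h => hxP (heP i h)
    simp [indicator_of_notMem hxP, indicator_of_notMem (hx _)]

/-- the dyadic fractional integral sum is pointwise dominated by the
sparse operator over the stopping family (the reduction (2.4)/(2.5) of Remark 2.6). -/
theorem stmt6 (n : ℕ) (α : ℝ) (hα : 0 < α) (hαn : α < n) :
    ∃ C : ℝ≥0∞, C ≠ ∞ ∧
    ∀ (D : Set (Cube n)), IsDyadicGrid D → ∀ Q₀ ∈ D,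
    ∀ f : (Fin n → ℝ) → ℝ≥0∞,
    ∀ S : Set (Cube n), S ⊆ D → Q₀ ∈ S → (∀ P ∈ S, P.toSet ⊆ Q₀.toSet) →
      (∀ Q ∈ D, Q.toSet ⊆ Q₀.toSet →
        ∃ P, IsSParent S Q P ∧ lebAvg f Q ≤ 4 * lebAvg f P) →
    ∀ x ∈ Q₀.toSet,
      (∑' Q : {Q : Cube n // Q ∈ D ∧ Q.toSet ⊆ Q₀.toSet},
          Q.1.toSet.indicator
            (fun _ => ENNReal.ofReal (Q.1.vol ^ (α/(n:ℝ))) * lebAvg f Q.1) x)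
        ≤ C * ∑' P : S, P.1.toSet.indicator
            (fun _ => ENNReal.ofReal (P.1.vol ^ (α/(n:ℝ))) * lebAvg f P.1) x := by
  have hn : n ≠ 0 := by exact_mod_cast (hα.trans hαn).ne'
  set r := ENNReal.ofReal ((2 : ℝ) ^ (-α))
  refine ⟨4 * (1 - r)⁻¹, ENNReal.mul_ne_top ofNat_ne_top
    (inv_ne_top.2 (tsub_pos_of_lt (ofReal_rpow_neg_lt_one one_lt_two hα)).ne'), ?_⟩
  intro D hD Q₀ _ f S _ _ _ hstop x _
  choose par hpar hle using fun Q : {Q // Q ∈ D ∧ Q.toSet ⊆ Q₀.toSet} => hstop Q.1 Q.2.1 Q.2.2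
  let parS : {Q // Q ∈ D ∧ Q.toSet ⊆ Q₀.toSet} → S := fun Q => ⟨par Q, (hpar Q).1⟩
  let volTerm (Q : Cube n) : ℝ≥0∞ :=
    Q.toSet.indicator (fun _ => ENNReal.ofReal (Q.vol ^ (α / n))) x
  calc _ ≤ ∑' Q, 4 * lebAvg f (parS Q) * volTerm Q.1 := ENNReal.tsum_le_tsum fun Q => by
        rw [indicator_mul_left, mul_comm]
        exact mul_le_mul_left (hle Q) _
    _ = ∑' P : S, 4 * lebAvg f P * ∑' Q : parS ⁻¹' {P}, volTerm Q.1.1 := by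
        rw [← ENNReal.tsum_fiberwise _ parS]
        refine tsum_congr fun P => ?_
        rw [← ENNReal.tsum_mul_left]
        exact tsum_congr fun Q => by rw [show parS Q.1 = P from Q.2]
    _ ≤ ∑' P : S, 4 * lebAvg f P * ((1 - r)⁻¹ * volTerm P) := by
        gcongr with P
        exact hD.tsum_indicator_vol_rpow_le hn hα P x
          (Subtype.val_injective.comp Subtype.val_injective) (fun Q => Q.1.2.1)
          fun Q => (congrArg Subtype.val Q.2 : par Q.1 = P) ▸ (hpar Q.1).2.1
    _ = _ := by
        rw [← ENNReal.tsum_mul_left]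
        exact tsum_congr fun P => by rw [indicator_mul_left]; ring
end
end

section
/- Let 1 < p ≤ q < ∞ and σ a locally finite measure on ℝⁿ, D a dyadic grid, and D_λ (for λ > 0) any pairwise-disjoint collection of dyadic cubes. Then ∑_{Q∈D_λ} σ(Q)^{q/p} (⟨f⟩_Q^σ)^q ≲ ‖f‖_{L^p(σ)}^q, where ⟨f⟩_Q^σ = (1/σ(Q))∫_Q |f|dσ, with implied constant depending only on p and q. More generally, the sequence a_Q = σ(Q)^{q/p} restricted to any pairwise-disjoint family is a (p,q)-Carleson sequence with respect to σ. -/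
open MeasureTheory Set ENNReal

noncomputable section

/-!
On each cube, Hölder's inequality gives `σ(Q)^{q/p} ⟨f⟩_Q^q ≤ (∫_Q f^p dσ)^{q/p}`. Since
`q/p ≥ 1`, the map `x ↦ x^{q/p}` is superadditive on `[0, ∞]`, so for a disjoint family of sets
`Q ⊆ P` and any measure `ν` we get `∑ ν(Q)^{q/p} ≤ ν(P)^{q/p}`. Taking `ν = σ` gives the Carleson
condition, and `ν = f^p σ`, `P = ℝⁿ` gives the embedding with constant `1`.
-/

theorem Cube.toSet_eq_pi_s19 {n : ℕ} (Q : Cube n) :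
    Q.toSet = univ.pi fun i => Ico (Q.corner i) (Q.corner i + Q.side) := by
  ext x
  simp [Cube.toSet]

theorem Cube.measurableSet_toSet_s19 {n : ℕ} (Q : Cube n) : MeasurableSet Q.toSet := by
  rw [Q.toSet_eq_pi_s19]
  exact MeasurableSet.univ_pi fun _ => measurableSet_Ico

theorem tsum_measure_rpow_le_of_pairwise_disjoint {α ι : Type*} [MeasurableSpace α]
    (ν : Measure α) {t : ι → Set α} (ht : ∀ i, MeasurableSet (t i))
    (hdisj : Pairwise (Function.onFun Disjoint t)) {s : Set α} (hts : ∀ i, t i ⊆ s) {r : ℝ}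
    (hr : 1 ≤ r) :
    ∑' i, ν (t i) ^ r ≤ ν s ^ r :=
  calc ∑' i, ν (t i) ^ r ≤ (∑' i, ν (t i)) ^ r := ENNReal.tsum_rpow_le_rpow_tsum _ hr
    _ ≤ ν (⋃ i, t i) ^ r := by gcongr; exact tsum_meas_le_meas_iUnion_of_disjoint ν ht hdisj
    _ ≤ ν s ^ r := by gcongr; exact iUnion_subset hts

theorem rpow_lintegral_le_lintegral_rpow {α : Type*} [MeasurableSpace α] {ν : Measure α}
    (hν : ν univ ≤ 1) {f : α → ℝ≥0∞} (hf : AEMeasurable f ν) {p : ℝ} (hp : 1 ≤ p) :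
    (∫⁻ x, f x ∂ν) ^ p ≤ ∫⁻ x, f x ^ p ∂ν := by
  have hp0 : 0 < p := by linarith
  have hHolder := ENNReal.lintegral_mul_norm_pow_le (hf.pow_const p)
    (aemeasurable_const (b := (1 : ℝ≥0∞)))
    (inv_nonneg.2 hp0.le) (sub_nonneg.2 (inv_le_one_of_one_le₀ hp)) (add_sub_cancel p⁻¹ 1)
  simp only [← ENNReal.rpow_mul, mul_inv_cancel₀ hp0.ne', ENNReal.rpow_one, ENNReal.one_rpow,
    mul_one, lintegral_const, one_mul] at hHolder
  rw [← ENNReal.le_rpow_inv_iff hp0]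
  calc ∫⁻ x, f x ∂ν ≤ (∫⁻ x, f x ^ p ∂ν) ^ p⁻¹ * ν univ ^ (1 - p⁻¹) := hHolder
    _ ≤ (∫⁻ x, f x ^ p ∂ν) ^ p⁻¹ := by
        refine mul_le_of_le_one_right zero_le (ENNReal.rpow_le_one hν ?_)
        exact sub_nonneg.2 (inv_le_one_of_one_le₀ hp)

theorem measure_mul_rpow_setAverage_le {α : Type*} [MeasurableSpace α] (μ : Measure α)
    (s : Set α) {f : α → ℝ≥0∞} (hf : AEMeasurable f μ) {p : ℝ} (hp : 1 ≤ p) :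
    μ s * ((∫⁻ x in s, f x ∂μ) / μ s) ^ p ≤ ∫⁻ x in s, f x ^ p ∂μ := by
  -- Jensen for the normalized restriction, whose mass is `≤ 1` even when `μ s` is `0` or `∞`.
  set ν := (μ s)⁻¹ • μ.restrict s
  have hν : ν univ ≤ 1 := by simp [ν, mul_comm]
  have hJensen := rpow_lintegral_le_lintegral_rpow hν (hf.restrict.smul_measure _) hp
  simp only [ν, lintegral_smul_measure, smul_eq_mul] at hJensen
  calc μ s * ((∫⁻ x in s, f x ∂μ) / μ s) ^ p
      ≤ μ s * ((μ s)⁻¹ * ∫⁻ x in s, f x ^ p ∂μ) := by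
        rw [ENNReal.div_eq_inv_mul]; gcongr
    _ ≤ ∫⁻ x in s, f x ^ p ∂μ := by
        rw [← mul_assoc]
        exact mul_le_of_le_one_left zero_le (ENNReal.mul_inv_le_one _)

theorem measure_rpow_mul_setAverage_rpow_le {α : Type*} [MeasurableSpace α] (μ : Measure α)
    (s : Set α) {f : α → ℝ≥0∞} (hf : AEMeasurable f μ) {p q : ℝ} (hp : 1 ≤ p) (hq : 0 ≤ q) :
    μ s ^ (q / p) * ((∫⁻ x in s, f x ∂μ) / μ s) ^ q ≤ (∫⁻ x in s, f x ^ p ∂μ) ^ (q / p) := by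
  have hqp : 0 ≤ q / p := div_nonneg hq (by linarith)
  calc μ s ^ (q / p) * ((∫⁻ x in s, f x ∂μ) / μ s) ^ q
      = (μ s * ((∫⁻ x in s, f x ∂μ) / μ s) ^ p) ^ (q / p) := by
        rw [ENNReal.mul_rpow_of_nonneg _ _ hqp, ← ENNReal.rpow_mul,
          mul_div_cancel₀ q (by linarith : p ≠ 0)]
    _ ≤ (∫⁻ x in s, f x ^ p ∂μ) ^ (q / p) := by
        gcongr
        exact measure_mul_rpow_setAverage_le μ s hf hp

/-- for a pairwise disjoint family of dyadic cubes, `a_Q = σ(Q)^{q/p}` is a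
`(p,q)`-Carleson sequence, and the corresponding embedding holds. -/
theorem stmt19 (p q : ℝ) (hp : 1 < p) (hpq : p ≤ q) :
    ∃ C : ℝ≥0∞, C ≠ ∞ ∧
    ∀ (n : ℕ) (μ : Measure (Fin n → ℝ)), IsLocallyFiniteMeasure μ →
    ∀ (D : Set (Cube n)), IsDyadicGrid D →
    ∀ Dl : Set (Cube n), Dl ⊆ D →
      (∀ Q ∈ Dl, ∀ R ∈ Dl, Q ≠ R → Disjoint Q.toSet R.toSet) →
      (∀ f : (Fin n → ℝ) → ℝ≥0∞, Measurable f →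
        (∑' Q : Dl, μ Q.1.toSet ^ (q/p) * avg μ f Q.1 ^ q)
          ≤ C * (∫⁻ x, f x ^ p ∂μ) ^ (q/p)) ∧
      (∀ P ∈ D, (∑' Q : {Q : Cube n // Q ∈ Dl ∧ Q.toSet ⊆ P.toSet},
          μ Q.1.toSet ^ (q/p)) ≤ μ P.toSet ^ (q/p)) := by
  have hr : 1 ≤ q / p := (one_le_div (by linarith)).2 hpq
  refine ⟨1, one_ne_top, fun n μ _ D _ Dl _ hdisj => ⟨fun f hf => ?_, fun P _ => ?_⟩⟩
  · set ν := μ.withDensity fun x => f x ^ p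
    have hν : ∀ Q : Cube n, ν Q.toSet = ∫⁻ x in Q.toSet, f x ^ p ∂μ := fun Q =>
      withDensity_apply _ Q.measurableSet_toSet_s19
    calc ∑' Q : Dl, μ Q.1.toSet ^ (q/p) * avg μ f Q.1 ^ q
        ≤ ∑' Q : Dl, ν Q.1.toSet ^ (q/p) := ENNReal.tsum_le_tsum fun Q => by
          rw [hν]
          exact measure_rpow_mul_setAverage_rpow_le μ _ hf.aemeasurable hp.le (by linarith)
      _ ≤ ν univ ^ (q/p) :=
          tsum_measure_rpow_le_of_pairwise_disjoint ν (fun Q => Q.1.measurableSet_toSet_s19)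
            (fun Q R hQR => hdisj _ Q.2 _ R.2 (Subtype.coe_ne_coe.2 hQR))
            (fun _ => subset_univ _) hr
      _ = 1 * (∫⁻ x, f x ^ p ∂μ) ^ (q/p) := by
          rw [one_mul, withDensity_apply _ MeasurableSet.univ, Measure.restrict_univ]
  · exact tsum_measure_rpow_le_of_pairwise_disjoint μ (fun Q => Q.1.measurableSet_toSet_s19)
      (fun Q R hQR => hdisj _ Q.2.1 _ R.2.1 (Subtype.coe_ne_coe.2 hQR)) (fun Q => Q.2.2) hr
end
end
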